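/- arXiv:2405.09356 — 2 statements merged into one kernel-verified Lean document; each statement's English description precedes it below -/
import Mathlib

section
/- Let I and J be nonempty finite sets and C : I × J → ℝ. Let x : I → ℝ satisfy x_i ≥ 0 for all i and Σ_{i∈I} x_i = 1, let q : J → ℝ satisfy q_j ∈ {0,1} for all j and Σ_{j∈J} q_j = 1, and let s ∈ ℝ satisfy: for every j' ∈ J with q_{j'} = 1, s = Σ_{i∈I} C_{i,j'} x_i. Then for every j ∈ J, s ≤ Σ_{i∈I} C_{i,j} x_i + Σ_{j'∈J, j'≠j} (max_{i∈I} (C_{i,j'} − C_{i,j})) · q_{j'}. -/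
/-! Since `q` is a 0–1 vector summing to one, `s = ∑ⱼ' qⱼ' vⱼ'` where `vⱼ' = ∑ᵢ Cᵢⱼ' xᵢ`, so
`s - vⱼ = ∑_{j' ≠ j} qⱼ' (vⱼ' - vⱼ)`; each `vⱼ' - vⱼ` is an `x`-average of `Cᵢⱼ' - Cᵢⱼ`,
hence at most its maximum over `i`. -/

open Finset

theorem Finset.sum_mul_le_sup'_of_sum_eq_one {ι R : Type*} [CommSemiring R] [LinearOrder R]
    [IsOrderedRing R] {s : Finset ι} (hs : s.Nonempty) (f w : ι → R)
    (hw0 : ∀ i ∈ s, 0 ≤ w i) (hw1 : ∑ i ∈ s, w i = 1) :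
    ∑ i ∈ s, f i * w i ≤ s.sup' hs f :=
  calc ∑ i ∈ s, f i * w i ≤ ∑ i ∈ s, s.sup' hs f * w i :=
        sum_le_sum fun i hi => mul_le_mul_of_nonneg_right (le_sup' f hi) (hw0 i hi)
    _ = s.sup' hs f := by rw [← mul_sum, hw1, mul_one]

theorem eq_sum_mul_of_zero_or_one {J R : Type*} [Fintype J] [CommSemiring R] {q v : J → R}
    {s : R} (hq01 : ∀ j, q j = 0 ∨ q j = 1) (hq1 : ∑ j, q j = 1)
    (hs : ∀ j, q j = 1 → s = v j) :
    s = ∑ j, q j * v j := by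
  have hterm : ∀ j, q j * s = q j * v j := fun j => by
    rcases hq01 j with h | h
    · simp [h]
    · rw [← hs j h]
  calc s = (∑ j, q j) * s := by rw [hq1, one_mul]
    _ = ∑ j, q j * v j := by rw [sum_mul]; exact sum_congr rfl fun j _ => hterm j

theorem stmt_2_general {I J : Type*} [Fintype I] [Fintype J] [DecidableEq J] [Nonempty I]
    (C : I → J → ℝ) (x : I → ℝ) (q : J → ℝ) (s : ℝ)
    (hx0 : ∀ i, 0 ≤ x i) (hx1 : ∑ i, x i = 1)
    (hq01 : ∀ j, q j = 0 ∨ q j = 1) (hq1 : ∑ j, q j = 1)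
    (hs : ∀ j', q j' = 1 → s = ∑ i, C i j' * x i) :
    ∀ j, s ≤ ∑ i, C i j * x i +
      ∑ j' ∈ Finset.univ.filter (fun j' => j' ≠ j),
        (Finset.univ.sup' Finset.univ_nonempty (fun i => C i j' - C i j)) * q j' := by
  intro j
  set v : J → ℝ := fun j => ∑ i, C i j * x i
  have hq0 : ∀ j', 0 ≤ q j' := fun j' => by rcases hq01 j' with h | h <;> simp [h]
  have hgap : ∀ j', v j' - v j ≤ univ.sup' univ_nonempty (fun i => C i j' - C i j) := fun j' => by
    simpa only [v, sub_mul, sum_sub_distrib] using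
      univ.sum_mul_le_sup'_of_sum_eq_one univ_nonempty (fun i => C i j' - C i j) x
        (fun i _ => hx0 i) hx1
  calc s = v j + ∑ j', q j' * (v j' - v j) := by
        simp only [mul_sub, sum_sub_distrib, ← sum_mul, hq1, one_mul, add_sub_cancel]
        exact eq_sum_mul_of_zero_or_one hq01 hq1 hs
    _ = v j + ∑ j' ∈ univ.filter (fun j' => j' ≠ j), q j' * (v j' - v j) := by
        rw [filter_ne', sum_erase]; simp
    _ ≤ _ := by
        gcongr v j + ?_
        exact sum_le_sum fun j' _ => by
          rw [mul_comm]; exact mul_le_mul_of_nonneg_right (hgap j') (hq0 j')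

theorem stmt_2 {I J : Type*} [Fintype I] [Fintype J] [DecidableEq I] [DecidableEq J] [Nonempty I] [Nonempty J]
    (C : I → J → ℝ) (x : I → ℝ) (q : J → ℝ) (s : ℝ)
    (hx0 : ∀ i, 0 ≤ x i) (hx1 : ∑ i, x i = 1)
    (hq01 : ∀ j, q j = 0 ∨ q j = 1) (hq1 : ∑ j, q j = 1)
    (hs : ∀ j', q j' = 1 → s = ∑ i, C i j' * x i) :
    ∀ j, s ≤ ∑ i, C i j * x i +
      ∑ j' ∈ Finset.univ.filter (fun j' => j' ≠ j),
        (Finset.univ.sup' Finset.univ_nonempty (fun i => C i j' - C i j)) * q j' :=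
  stmt_2_general C x q s hx0 hx1 hq01 hq1 hs
end

section
/- Let I and J be nonempty finite sets and C : I × J → ℝ. Let q : J → ℝ satisfy q_j ∈ {0,1} for all j and Σ_{j∈J} q_j = 1. Then for every j ∈ J, Σ_{j'∈J, j'≠j} (max_{i∈I} (C_{i,j'} − C_{i,j})) · q_{j'} ≤ (max_{l∈J} max_{i∈I} (C_{i,l} − C_{i,j})) · (1 − q_j). -/
open Finset

lemma Finset.sum_mul_le_mul_sum_of_le {ι R : Type*} [CommSemiring R] [PartialOrder R]
    [IsOrderedRing R] {s : Finset ι} {f w : ι → R} {M : R}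
    (hf : ∀ i ∈ s, f i ≤ M) (hw : ∀ i ∈ s, 0 ≤ w i) :
    ∑ i ∈ s, f i * w i ≤ M * ∑ i ∈ s, w i := by
  rw [mul_sum]
  exact sum_le_sum fun i hi => mul_le_mul_of_nonneg_right (hf i hi) (hw i hi)

lemma Finset.sum_filter_ne_eq_sub {ι R : Type*} [Fintype ι] [DecidableEq ι] [AddCommGroup R]
    (f : ι → R) (j : ι) :
    ∑ j' ∈ univ.filter (fun j' => j' ≠ j), f j' = ∑ j', f j' - f j := by
  rw [filter_ne', sum_erase_eq_sub (mem_univ j)]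

theorem stmt_3_general {I J : Type*} [Fintype I] [Fintype J] [DecidableEq J] [Nonempty I] [Nonempty J]
    (C : I → J → ℝ) (q : J → ℝ)
    (hq01 : ∀ j, q j = 0 ∨ q j = 1) (hq1 : ∑ j, q j = 1) :
    ∀ j, ∑ j' ∈ Finset.univ.filter (fun j' => j' ≠ j),
        (Finset.univ.sup' Finset.univ_nonempty (fun i => C i j' - C i j)) * q j'
      ≤ (Finset.univ.sup' Finset.univ_nonempty (fun l =>
          Finset.univ.sup' Finset.univ_nonempty (fun i => C i l - C i j))) * (1 - q j) := by
  intro j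
  have hq_nonneg : ∀ j', 0 ≤ q j' := fun j' => by rcases hq01 j' with h | h <;> simp [h]
  rw [← hq1, ← sum_filter_ne_eq_sub]
  exact sum_mul_le_mul_sum_of_le (fun l _ => le_sup' (fun l => univ.sup' univ_nonempty
    (fun i => C i l - C i j)) (mem_univ l)) fun j' _ => hq_nonneg j'

theorem stmt_3 {I J : Type*} [Fintype I] [Fintype J] [DecidableEq I] [DecidableEq J] [Nonempty I] [Nonempty J]
    (C : I → J → ℝ) (q : J → ℝ)
    (hq01 : ∀ j, q j = 0 ∨ q j = 1) (hq1 : ∑ j, q j = 1) :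
    ∀ j, ∑ j' ∈ Finset.univ.filter (fun j' => j' ≠ j),
        (Finset.univ.sup' Finset.univ_nonempty (fun i => C i j' - C i j)) * q j'
      ≤ (Finset.univ.sup' Finset.univ_nonempty (fun l =>
          Finset.univ.sup' Finset.univ_nonempty (fun i => C i l - C i j))) * (1 - q j) :=
  stmt_3_general C q hq01 hq1
end
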